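/- arXiv:2010.01498 — 7 statements merged into one kernel-verified Lean document; each statement's English description precedes it below -/
import Mathlib

section
/- For the Gaussian window g(t) = (1/√(2π)) e^{-t²/2}, the modulus of its polynomial Fourier transform satisfies |ğ(η,λ)| = (1+4π²λ²)^{-1/4} · exp(-2π²η²/(1+4π²λ²)) for all η, λ ∈ ℝ. -/
/-!
Completing the square: `g(τ) e^{-i(2πητ + πλτ²)}` is `(2π)^{-1/2} exp(bτ² + cτ)` with
`b = -1/2 - iπλ` and `c = -2πiη`, so the Gaussian integral gives
`ğ(η,λ) = (2π)^{-1/2} (π/(-b))^{1/2} exp(-c²/(4b))`. Only `|b| = √(1 + 4π²λ²)/2` and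
`Re(-c²/(4b)) = 4π²η² Re b / (4|b|²)` survive in the modulus.
-/

open MeasureTheory Real

/-- The Gaussian window `g(t) = (1/√(2π)) e^{-t²/2}`. -/
noncomputable def gwin (t : ℝ) : ℝ := (1 / Real.sqrt (2 * Real.pi)) * Real.exp (-t ^ 2 / 2)

/-- The order-2 polynomial Fourier transform `ğ(η,λ) = ∫ g(τ) e^{-i2πητ - iπλτ²} dτ`. -/
noncomputable def pft (η lam : ℝ) : ℂ :=
  ∫ τ : ℝ, (gwin τ : ℂ) *
    Complex.exp (-((2 * Real.pi * η * τ + Real.pi * lam * τ ^ 2 : ℝ) : ℂ) * Complex.I)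

open Complex in
theorem norm_integral_cexp_quadratic {b : ℂ} (hb : b.re < 0) (c d : ℂ) :
    ‖∫ x : ℝ, cexp (b * x ^ 2 + c * x + d)‖ = √(π / ‖b‖) * rexp (d - c ^ 2 / (4 * b)).re := by
  rw [integral_cexp_quadratic hb, norm_mul, norm_exp, ← ofReal_one, ← ofReal_ofNat,
    ← ofReal_div, norm_cpow_real, norm_div, norm_neg, norm_real, norm_of_nonneg pi_pos.le,
    sqrt_eq_rpow]

open Complex in
theorem pft_eq_integral_cexp_quadratic (η lam : ℝ) :
    pft η lam = ((√(2 * π))⁻¹ : ℝ) * ∫ x : ℝ,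
      cexp ((-(1 / 2) - π * lam * I) * x ^ 2 + (-(2 * π * η) * I) * x + 0) := by
  rw [← integral_const_mul]
  refine integral_congr_ae (Filter.Eventually.of_forall fun x => ?_)
  simp only [gwin]
  push_cast
  rw [mul_assoc, ← Complex.exp_add]
  ring_nf

theorem inv_sqrt_two_pi_mul_sqrt_pi_div {A : ℝ} (hA : 0 < A) :
    (√(2 * π))⁻¹ * √(π / √(A / 4)) = A ^ (-(1 / 4) : ℝ) := by
  have hsqrt : √(A / 4) = √A / 2 := by
    rw [sqrt_div' _ zero_le_four, show (4 : ℝ) = 2 ^ 2 by norm_num, sqrt_sq zero_le_two]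
  have hinner : (2 * π)⁻¹ * (π / (√A / 2)) = A ^ (-(1 / 2) : ℝ) := by
    rw [rpow_neg hA.le, ← sqrt_eq_rpow]
    field_simp
  rw [hsqrt, ← sqrt_inv, ← sqrt_mul (by positivity), hinner, sqrt_eq_rpow, ← rpow_mul hA.le]
  norm_num

/-- Modulus of the polynomial Fourier transform of the Gaussian window. -/
theorem stmt_1 (η lam : ℝ) :
    ‖pft η lam‖ =
      (1 + 4 * Real.pi ^ 2 * lam ^ 2) ^ (-(1 / 4) : ℝ) *
        Real.exp (-(2 * Real.pi ^ 2 * η ^ 2) / (1 + 4 * Real.pi ^ 2 * lam ^ 2)) := by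
  open Complex in
  set b : ℂ := -(1 / 2) - π * lam * I
  have hb_re : b.re = -(1 / 2) := by simp [b]
  have hb_im : b.im = -(π * lam) := by simp [b]
  have hnormSq : normSq b = (1 + 4 * π ^ 2 * lam ^ 2) / 4 := by
    rw [normSq_apply, hb_re, hb_im]
    ring
  have hc : (-(2 * π * η) * I) ^ 2 = ((-(4 * π ^ 2 * η ^ 2) : ℝ) : ℂ) := by
    push_cast
    rw [mul_pow, I_sq]
    ring
  have hexponent : (0 - (-(2 * π * η) * I) ^ 2 / (4 * b)).re =
      -(2 * π ^ 2 * η ^ 2) / (1 + 4 * π ^ 2 * lam ^ 2) := by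
    rw [hc, zero_sub, neg_re, div_eq_mul_inv, re_ofReal_mul, inv_re, normSq_mul, hnormSq, mul_re,
      hb_re]
    simp only [re_ofNat, im_ofNat, normSq_ofNat, zero_mul, sub_zero]
    field_simp
    ring
  rw [pft_eq_integral_cexp_quadratic, norm_mul,
    norm_integral_cexp_quadratic (by rw [hb_re]; norm_num), hexponent, ← mul_assoc, norm_real,
    norm_of_nonneg (by positivity), norm_def, hnormSq,
    inv_sqrt_two_pi_mul_sqrt_pi_div (by positivity)]
end

section
/- For the Gaussian window g(t) = (1/√(2π)) e^{-t²/2}, there exists a constant C > 0 such that |ğ(η,λ)| ≤ C / √(|η| + |λ|) for all (η,λ) ≠ (0,0). -/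
open MeasureTheory Real

/-!
The integral defining `pft` is a complex Gaussian integral, so
`‖pft η λ‖² = exp (-π²η²/D) / (2√D)` with `D = 1/4 + π²λ²`. Both `|λ|` and `|η| exp (-π²η²/D)`
are at most `√D`, the latter because `s exp (-s²) ≤ 1`. Hence `‖pft η λ‖² (|η| + |λ|) ≤ 1`,
and `C = 1` works.
-/

open Complex in
lemma pft_eq (η lam : ℝ) :
    pft η lam = (1 / √(2 * π) : ℝ) * ((π / (1 / 2 + π * lam * I)) ^ (1 / 2 : ℂ) *
      cexp (-(π ^ 2 * η ^ 2) / (1 / 2 + π * lam * I))) := by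
  set a : ℂ := 1 / 2 + π * lam * I
  have ha : a ≠ 0 := fun h => by simpa [a] using congrArg re h
  have hintegrand (τ : ℝ) : (gwin τ : ℂ) *
      cexp (-((2 * π * η * τ + π * lam * τ ^ 2 : ℝ) : ℂ) * I) =
      (1 / √(2 * π) : ℝ) * cexp (-a * τ ^ 2 + (-2 * π * η * I) * τ + 0) := by
    rw [gwin]
    push_cast
    rw [mul_assoc, ← Complex.exp_add]
    congr 2
    ring
  have hexponent : 0 - (-2 * π * η * I) ^ 2 / (4 * -a) = -(π ^ 2 * η ^ 2) / a := by
    field_simp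
    linear_combination (4 * (π : ℂ) ^ 2 * η ^ 2) * I_sq
  rw [pft]
  simp_rw [hintegrand]
  rw [integral_const_mul, integral_cexp_quadratic (by simp [a]), neg_neg, hexponent]

open Complex in
lemma norm_pft_sq (η lam : ℝ) :
    ‖pft η lam‖ ^ 2 =
      rexp (-(π ^ 2 * η ^ 2) / (1 / 4 + π ^ 2 * lam ^ 2)) / (2 * √(1 / 4 + π ^ 2 * lam ^ 2)) := by
  set D := 1 / 4 + π ^ 2 * lam ^ 2
  have hD : 0 < D := by positivity
  rw [pft_eq]
  set a : ℂ := 1 / 2 + π * lam * I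
  have hnorm : ‖a‖ = √D := by
    rw [show a = ((1 / 2 : ℝ) : ℂ) + ((π * lam : ℝ) : ℂ) * I by push_cast; rfl, norm_add_mul_I]
    ring_nf
    rfl
  have hsqrt : ‖(π / a) ^ (1 / 2 : ℂ)‖ ^ 2 = π / √D := by
    rw [show (1 / 2 : ℂ) = ((1 / 2 : ℝ) : ℂ) by norm_num, norm_cpow_real, ← Real.sqrt_eq_rpow,
      Real.sq_sqrt (norm_nonneg _), norm_div, hnorm, norm_real, Real.norm_of_nonneg pi_pos.le]
  have hexp : ‖cexp (-(π ^ 2 * η ^ 2) / a)‖ ^ 2 = rexp (-(π ^ 2 * η ^ 2) / D) := by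
    have hreal : -(π ^ 2 * η ^ 2) / a = ((-(π ^ 2 * η ^ 2) : ℝ) : ℂ) * a⁻¹ := by push_cast; ring
    have hre : a.re = 1 / 2 := by simp [a]
    rw [norm_exp, hreal, re_ofReal_mul, inv_re, normSq_eq_norm_sq, hnorm, Real.sq_sqrt hD.le,
      ← Real.exp_nat_mul]
    rw [hre]
    congr 1
    field_simp
    ring
  have hconst : ‖((1 / √(2 * π) : ℝ) : ℂ)‖ ^ 2 = 1 / (2 * π) := by
    rw [norm_real, Real.norm_of_nonneg (by positivity), div_pow, Real.sq_sqrt (by positivity)]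
    ring
  rw [norm_mul, norm_mul, mul_pow, mul_pow, hsqrt, hexp, hconst]
  field_simp

lemma mul_exp_neg_sq_le_one (s : ℝ) : s * rexp (-s ^ 2) ≤ 1 := by
  rw [Real.exp_neg, ← div_eq_mul_inv, div_le_one (exp_pos _)]
  nlinarith [add_one_le_exp (s ^ 2), sq_nonneg (s - 1)]

lemma abs_mul_exp_neg_sq_div_sq_le (x : ℝ) {r : ℝ} (hr : 0 < r) :
    |x| * rexp (-(x ^ 2 / r ^ 2)) ≤ r := by
  have h := mul_exp_neg_sq_le_one (|x| / r)
  rw [div_pow, sq_abs, div_mul_eq_mul_div, div_le_one hr] at h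
  exact h

lemma one_le_pi_sq : 1 ≤ π ^ 2 := by nlinarith [pi_gt_three]

lemma abs_le_sqrt_quarter_add_pi_sq_mul_sq (lam : ℝ) : |lam| ≤ √(1 / 4 + π ^ 2 * lam ^ 2) := by
  rw [Real.le_sqrt (abs_nonneg _) (by positivity), sq_abs]
  nlinarith [mul_le_mul_of_nonneg_right one_le_pi_sq (sq_nonneg lam)]

lemma norm_pft_sq_mul_le_one (η lam : ℝ) : ‖pft η lam‖ ^ 2 * (|η| + |lam|) ≤ 1 := by
  rw [norm_pft_sq]
  set D := 1 / 4 + π ^ 2 * lam ^ 2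
  have hD : 0 < D := by positivity
  have hdecay : rexp (-(π ^ 2 * η ^ 2) / D) ≤ rexp (-(η ^ 2 / √D ^ 2)) := by
    rw [Real.sq_sqrt hD.le, neg_div]
    gcongr
    nlinarith [mul_le_mul_of_nonneg_right one_le_pi_sq (sq_nonneg η)]
  have hη : |η| * rexp (-(π ^ 2 * η ^ 2) / D) ≤ √D :=
    (mul_le_mul_of_nonneg_left hdecay (abs_nonneg η)).trans
      (abs_mul_exp_neg_sq_div_sq_le η (Real.sqrt_pos.mpr hD))
  have hlam : |lam| * rexp (-(π ^ 2 * η ^ 2) / D) ≤ √D :=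
    (mul_le_of_le_one_right (abs_nonneg _) (hdecay.trans (Real.exp_le_one_iff.mpr
      (neg_nonpos.mpr (by positivity))))).trans (abs_le_sqrt_quarter_add_pi_sq_mul_sq lam)
  rw [div_mul_eq_mul_div, div_le_one (by positivity)]
  linarith

/-- Decay bound: there is  with  for . -/
theorem stmt_3 :
    ∃ C : ℝ, 0 < C ∧ ∀ η lam : ℝ, (η, lam) ≠ (0, 0) →
      ‖pft η lam‖ ≤ C / Real.sqrt (|η| + |lam|) := by
  refine ⟨1, one_pos, fun η lam h => ?_⟩
  have hpos : 0 < |η| + |lam| := by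
    obtain hη | hlam : η ≠ 0 ∨ lam ≠ 0 := by
      by_contra! hz
      exact h (by rw [hz.1, hz.2])
    all_goals positivity
  calc ‖pft η lam‖ = √(‖pft η lam‖ ^ 2) := (Real.sqrt_sq (norm_nonneg _)).symm
    _ ≤ √(1 / (|η| + |lam|)) :=
        Real.sqrt_le_sqrt ((le_div_iff₀ hpos).mpr (norm_pft_sq_mul_le_one η lam))
    _ = 1 / √(|η| + |lam|) := by rw [one_div, Real.sqrt_inv, one_div]
end

section
/- Suppose x(t) = Σ_{k=0}^{K} A_k(t) e^{i2π φ_k(t)} where for each k: A_k ∈ L∞(ℝ), A_k(t) > 0, φ_k ∈ C³(ℝ), |A_k(t+τ) - A_k(t)| ≤ α³ B₁ |τ| A_k(t) for all t, τ, and sup_t |φ'''_k(t)| ≤ α⁷ B₂. Let x_m(t,τ) = Σ_{k=0}^{K} A_k(t) e^{i2π φ_k(t)} e^{i2π(φ'_k(t)τ + (1/2)φ''_k(t)τ²)} and M(t) = Σ_{k=0}^{K} A_k(t). Then for all t, τ ∈ ℝ: |x(t+τ) - x_m(t,τ)| ≤ M(t)(B₁ α³ |τ| + (π/3) B₂ α⁷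 |τ|³). -/
/-! Component by component, the error splits as
`(A(t+τ) - A(t)) e^{iθ} + A(t) e^{iθₘ} (e^{i(θ - θₘ)} - 1)` with `θ` the true and `θₘ` the
chirp phase. The first term is controlled by the amplitude hypothesis, the second by
`|e^{ix} - 1| ≤ |x|` and the Lagrange remainder `|θ - θₘ| ≤ 2π sup |φ'''| |τ|³ / 6`. -/

open Real

open Set in
theorem abs_sub_taylor_two_le {f : ℝ → ℝ} {C : ℝ} (hf : ContDiff ℝ 3 f)
    (hC : ∀ s, |iteratedDeriv 3 f s| ≤ C) (t τ : ℝ) :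
    |f (t + τ) - (f t + deriv f t * τ + 1 / 2 * deriv (deriv f) t * τ ^ 2)| ≤ C / 6 * |τ| ^ 3 := by
  rcases eq_or_ne τ 0 with rfl | hτ
  · simp
  have hne : t ≠ t + τ := by simpa using hτ
  have hu := uniqueDiffOn_uIcc hne
  have hderiv (n : ℕ) (hn : n ≤ 3) :
      iteratedDerivWithin n f (uIcc t (t + τ)) t = iteratedDeriv n f t :=
    iteratedDerivWithin_eq_iteratedDeriv hu (hf.contDiffAt.of_le (by exact_mod_cast hn))
      left_mem_uIcc
  have hpoly : taylorWithinEval f 2 (uIcc t (t + τ)) t (t + τ) =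
      f t + deriv f t * τ + 1 / 2 * deriv (deriv f) t * τ ^ 2 := by
    rw [taylor_within_apply]
    simp only [Finset.sum_range_succ, Finset.sum_range_zero, iteratedDerivWithin_zero,
      hderiv 1 (by norm_num), hderiv 2 (by norm_num), iteratedDeriv_succ,
      smul_eq_mul]
    norm_num [Nat.factorial]
    ring
  obtain ⟨s, -, hs⟩ := taylor_mean_remainder_lagrange_iteratedDeriv (n := 2) hne hf.contDiffOn
  have hfact : ((Nat.factorial (2 + 1) : ℕ) : ℝ) = 6 := by norm_num [Nat.factorial]
  rw [← hpoly, hs, add_sub_cancel_left, hfact, abs_div, abs_mul, abs_pow,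
    abs_of_pos (by norm_num : (0 : ℝ) < 6), mul_div_right_comm]
  gcongr
  exact hC s

open Complex in
theorem norm_mul_exp_sub_mul_exp_mul_exp_le (a a' θ θ₀ θ₁ : ℝ) (ha : 0 ≤ a) :
    ‖(a' : ℂ) * exp (θ * I) - a * exp (θ₀ * I) * exp (θ₁ * I)‖ ≤
      |a' - a| + a * |θ - θ₀ - θ₁| := by
  have hexp : exp (θ * I) = exp (θ₀ * I) * exp (θ₁ * I) * exp (I * (θ - θ₀ - θ₁ : ℝ)) := by
    rw [← Complex.exp_add, ← Complex.exp_add]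
    push_cast
    ring_nf
  have hsplit : (a' : ℂ) * exp (θ * I) - a * exp (θ₀ * I) * exp (θ₁ * I) =
      (a' - a : ℝ) * exp (θ * I) +
        a * exp (θ₀ * I) * exp (θ₁ * I) * (exp (I * (θ - θ₀ - θ₁ : ℝ)) - 1) := by
    rw [ofReal_sub, hexp]
    ring
  rw [hsplit]
  refine (norm_add_le _ _).trans ?_
  simp only [norm_mul, norm_exp_ofReal_mul_I, norm_real, Real.norm_eq_abs, abs_of_nonneg ha,
    mul_one]
  gcongr
  exact Real.norm_exp_I_mul_ofReal_sub_one_le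

open Complex in
theorem norm_sub_localChirp_le {a φ : ℝ → ℝ} {c D t τ : ℝ} (hφ : ContDiff ℝ 3 φ)
    (hD : ∀ s, |iteratedDeriv 3 φ s| ≤ D) (ha : 0 ≤ a t)
    (hda : |a (t + τ) - a t| ≤ c * |τ| * a t) :
    ‖(a (t + τ) : ℂ) * exp ((2 * π * φ (t + τ) : ℝ) * I) -
        a t * exp ((2 * π * φ t : ℝ) * I) *
          exp ((2 * π * (deriv φ t * τ + 1 / 2 * deriv (deriv φ) t * τ ^ 2) : ℝ) * I)‖ ≤
      a t * (c * |τ| + π / 3 * D * |τ| ^ 3) := by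
  refine (norm_mul_exp_sub_mul_exp_mul_exp_le _ _ _ _ _ ha).trans ?_
  have hphase : 2 * π * φ (t + τ) - 2 * π * φ t -
      2 * π * (deriv φ t * τ + 1 / 2 * deriv (deriv φ) t * τ ^ 2) =
      2 * π * (φ (t + τ) - (φ t + deriv φ t * τ + 1 / 2 * deriv (deriv φ) t * τ ^ 2)) := by
    ring
  rw [hphase, abs_mul, abs_of_pos (by positivity : 0 < 2 * π)]
  have htaylor := abs_sub_taylor_two_le hφ hD t τ
  calc _ ≤ c * |τ| * a t + a t * (2 * π * (D / 6 * |τ| ^ 3)) := by gcongr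
    _ = _ := by ring

theorem stmt_5_general (K : ℕ) (A φ : Fin (K + 1) → ℝ → ℝ) (α B₁ B₂ : ℝ)
    (hApos : ∀ k t, 0 < A k t)
    (hφsmooth : ∀ k, ContDiff ℝ 3 (φ k))
    (hA : ∀ k t τ, |A k (t + τ) - A k t| ≤ α ^ 3 * B₁ * |τ| * A k t)
    (hφ3 : ∀ k t, |iteratedDeriv 3 (φ k) t| ≤ α ^ 7 * B₂) :
    ∀ t τ : ℝ,
      norm
        ((∑ k, (A k (t + τ) : ℂ) *
            Complex.exp (((2 * Real.pi * φ k (t + τ) : ℝ) : ℂ) * Complex.I)) -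
         ∑ k, (A k t : ℂ) *
            Complex.exp (((2 * Real.pi * φ k t : ℝ) : ℂ) * Complex.I) *
            Complex.exp (((2 * Real.pi *
              (deriv (φ k) t * τ + (1 / 2) * deriv (deriv (φ k)) t * τ ^ 2) : ℝ) : ℂ) *
              Complex.I))
      ≤ (∑ k, A k t) * (B₁ * α ^ 3 * |τ| + (Real.pi / 3) * B₂ * α ^ 7 * |τ| ^ 3) := by
  intro t τ
  rw [← Finset.sum_sub_distrib, Finset.sum_mul]
  refine (norm_sum_le _ _).trans (Finset.sum_le_sum fun k _ => ?_)
  refine (norm_sub_localChirp_le (hφsmooth k) (hφ3 k) (hApos k t).le (hA k t τ)).trans_eq ?_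
  ring

/-- Linear-chirp local approximation error bound (Lemma 1): for a multicomponent signal
`x(t) = Σ A_k(t) e^{i2πφ_k(t)}` with slowly varying amplitudes and bounded third phase
derivatives, the local linear-chirp model approximates `x(t+τ)` with error
`M(t)(B₁α³|τ| + (π/3)B₂α⁷|τ|³)`. -/
theorem stmt_5 (K : ℕ) (A φ : Fin (K + 1) → ℝ → ℝ) (α B₁ B₂ : ℝ)
    (hα : 0 < α) (hB₁ : 0 < B₁) (hB₂ : 0 < B₂)
    (hAbdd : ∀ k, ∃ C : ℝ, ∀ t, |A k t| ≤ C)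
    (hApos : ∀ k t, 0 < A k t)
    (hφsmooth : ∀ k, ContDiff ℝ 3 (φ k))
    (hA : ∀ k t τ, |A k (t + τ) - A k t| ≤ α ^ 3 * B₁ * |τ| * A k t)
    (hφ3 : ∀ k t, |iteratedDeriv 3 (φ k) t| ≤ α ^ 7 * B₂) :
    ∀ t τ : ℝ,
      norm
        ((∑ k, (A k (t + τ) : ℂ) *
            Complex.exp (((2 * Real.pi * φ k (t + τ) : ℝ) : ℂ) * Complex.I)) -
         ∑ k, (A k t : ℂ) *
            Complex.exp (((2 * Real.pi * φ k t : ℝ) : ℂ) * Complex.I) *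
            Complex.exp (((2 * Real.pi *
              (deriv (φ k) t * τ + (1 / 2) * deriv (deriv (φ k)) t * τ ^ 2) : ℝ) : ℂ) *
              Complex.I))
      ≤ (∑ k, A k t) * (B₁ * α ^ 3 * |τ| + (Real.pi / 3) * B₂ * α ^ 7 * |τ| ^ 3) :=
  stmt_5_general K A φ α B₁ B₂ hApos hφsmooth hA hφ3
end

section
/- Let g ≥ 0 be a window with ∫_ℝ g = 1 and supp(g) ⊆ [-N, N]. Let x, x_m, M, α, B₁, B₂ be as in the linear-chirp approximation setting, so that |x(t+τ) - x_m(t,τ)| ≤ M(B₁α³|τ| + (π/3)B₂α⁷|τ|³). Define the chirplet transform 𝔖(η,λ) = ∫_ℝ x(t+τ) (1/σ) g(τ/σ) e^{-i2πητ - iπλτ²} dτ and its chirp approximation ℜ(η,λ) = ∫_ℝ x_m(t,τ) (1/σ) g(τ/σ) e^{-i2πητ - iπλτ²} dτ, with σ = c₀/α². Then for all η, λ: |𝔖(η,λ) - ℜ(η,λ)| ≤ α M (B₁ c₀ N + (π/3) B₂ c₀³ N³). -/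
open MeasureTheory Real

/-!
On the window's support `|τ| ≤ Nσ`, and with `σ = c₀/α²` the powers of `α` in the pointwise error
bound `M (B₁ α³ |τ| + (π/3) B₂ α⁷ |τ|³)` collapse to a single factor `α`. Since the chirp factor
has modulus one, integrating that uniform bound against the window `g(τ/σ)/σ`, of integral
`∫ g = 1`, gives the estimate.
-/

lemma norm_integral_mul_mul_le_of_norm_le_on_support {X : Type*} [MeasurableSpace X]
    {μ : Measure X} {f e : X → ℂ} {w : X → ℝ} {K : ℝ}
    (hw0 : ∀ τ, 0 ≤ w τ) (hw : Integrable w μ) (he : ∀ τ, ‖e τ‖ ≤ 1)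
    (hf : ∀ τ, w τ ≠ 0 → ‖f τ‖ ≤ K) :
    ‖∫ τ, f τ * (w τ : ℂ) * e τ ∂μ‖ ≤ K * ∫ τ, w τ ∂μ := by
  rw [← integral_const_mul]
  refine norm_integral_le_of_norm_le (hw.const_mul K) (Filter.Eventually.of_forall fun τ => ?_)
  rw [norm_mul, norm_mul, Complex.norm_real, Real.norm_of_nonneg (hw0 τ)]
  rcases eq_or_ne (w τ) 0 with hzero | hne
  · simp [hzero]
  · calc ‖f τ‖ * w τ * ‖e τ‖ ≤ ‖f τ‖ * w τ :=
          mul_le_of_le_one_right (mul_nonneg (norm_nonneg _) (hw0 τ)) (he τ)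
      _ ≤ K * w τ := mul_le_mul_of_nonneg_right (hf τ hne) (hw0 τ)

lemma norm_exp_neg_ofReal_mul_I (r : ℝ) : ‖Complex.exp (-(r : ℂ) * Complex.I)‖ = 1 := by
  rw [← Complex.ofReal_neg, Complex.norm_exp_ofReal_mul_I]

lemma integral_comp_div_div (g : ℝ → ℝ) {σ : ℝ} (hσ : 0 < σ) :
    ∫ τ, g (τ / σ) / σ = ∫ t, g t := by
  rw [integral_div, Measure.integral_comp_div g σ, smul_eq_mul, abs_of_pos hσ]
  field_simp

lemma abs_le_mul_of_div_mem_Icc {τ σ N : ℝ} (hσ : 0 < σ) (h : τ / σ ∈ Set.Icc (-N) N) :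
    |τ| ≤ N * σ := by
  have hlow := (le_div_iff₀ hσ).mp h.1
  exact abs_le.mpr ⟨by linarith, (div_le_iff₀ hσ).mp h.2⟩

lemma chirp_error_le_of_abs_le {α M a b c₀ N s : ℝ} (hα : 0 < α) (hM : 0 ≤ M) (ha : 0 ≤ a)
    (hb : 0 ≤ b) (hs0 : 0 ≤ s) (hs : s ≤ N * (c₀ / α ^ 2)) :
    M * (a * α ^ 3 * s + b * α ^ 7 * s ^ 3) ≤ α * M * (a * c₀ * N + b * c₀ ^ 3 * N ^ 3) := by
  calc M * (a * α ^ 3 * s + b * α ^ 7 * s ^ 3)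
      ≤ M * (a * α ^ 3 * (N * (c₀ / α ^ 2)) + b * α ^ 7 * (N * (c₀ / α ^ 2)) ^ 3) := by gcongr
    _ = α * M * (a * c₀ * N + b * c₀ ^ 3 * N ^ 3) := by field_simp

theorem stmt_6_general (g : ℝ → ℝ) (N σ c₀ α M B₁ B₂ : ℝ)
    (hg0 : ∀ t, 0 ≤ g t) (hg1 : ∫ t : ℝ, g t = 1)
    (hsupp : Function.support g ⊆ Set.Icc (-N) N)
    (hα : 0 < α) (hc₀ : 0 < c₀) (hσ : σ = c₀ / α ^ 2)
    (hM : 0 ≤ M) (hB₁ : 0 < B₁) (hB₂ : 0 < B₂)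
    (x : ℝ → ℂ) (xm : ℝ → ℝ → ℂ) (t : ℝ)
    (hbound : ∀ τ : ℝ, ‖x (t + τ) - xm t τ‖ ≤
      M * (B₁ * α ^ 3 * |τ| + (Real.pi / 3) * B₂ * α ^ 7 * |τ| ^ 3))
    (η lam : ℝ)
    (hintx : Integrable (fun τ : ℝ => x (t + τ) * ((g (τ / σ) / σ : ℝ) : ℂ) *
      Complex.exp (-((2 * Real.pi * η * τ + Real.pi * lam * τ ^ 2 : ℝ) : ℂ) * Complex.I)))
    (hintxm : Integrable (fun τ : ℝ => xm t τ * ((g (τ / σ) / σ : ℝ) : ℂ) *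
      Complex.exp (-((2 * Real.pi * η * τ + Real.pi * lam * τ ^ 2 : ℝ) : ℂ) * Complex.I))) :
    ‖((∫ τ : ℝ, x (t + τ) * ((g (τ / σ) / σ : ℝ) : ℂ) *
          Complex.exp (-((2 * Real.pi * η * τ + Real.pi * lam * τ ^ 2 : ℝ) : ℂ) * Complex.I)) -
       ∫ τ : ℝ, xm t τ * ((g (τ / σ) / σ : ℝ) : ℂ) *
          Complex.exp (-((2 * Real.pi * η * τ + Real.pi * lam * τ ^ 2 : ℝ) : ℂ) * Complex.I))‖
      ≤ α * M * (B₁ * c₀ * N + (Real.pi / 3) * B₂ * c₀ ^ 3 * N ^ 3) := by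
  have hσ0 : 0 < σ := hσ ▸ by positivity
  have hg : Integrable g := .of_integral_ne_zero (hg1 ▸ one_ne_zero)
  rw [← integral_sub hintx hintxm]
  simp_rw [← sub_mul]
  calc _ ≤ α * M * (B₁ * c₀ * N + (Real.pi / 3) * B₂ * c₀ ^ 3 * N ^ 3) *
        ∫ τ, g (τ / σ) / σ := by
        refine norm_integral_mul_mul_le_of_norm_le_on_support
          (fun τ => div_nonneg (hg0 _) hσ0.le) ((hg.comp_div hσ0.ne').div_const σ)
          (fun τ => (norm_exp_neg_ofReal_mul_I _).le) (fun τ hτ => (hbound τ).trans ?_)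
        have hτ := abs_le_mul_of_div_mem_Icc hσ0 (hsupp ((div_ne_zero_iff.mp hτ).1))
        exact chirp_error_le_of_abs_le hα hM hB₁.le (by positivity) (abs_nonneg τ) (hσ ▸ hτ)
    _ = _ := by rw [integral_comp_div_div g hσ0, hg1, mul_one]

/-- Lemma 2: the chirplet transform of a signal and of its local linear-chirp approximation
differ by at most `α M (B₁ c₀ N + (π/3) B₂ c₀³ N³)`, where the window g ≥ 0 has unit
integral and support in [-N, N], and σ = c₀/α². -/
theorem stmt_6 (g : ℝ → ℝ) (N σ c₀ α M B₁ B₂ : ℝ)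
    (hg0 : ∀ t, 0 ≤ g t) (hg1 : ∫ t : ℝ, g t = 1)
    (hsupp : Function.support g ⊆ Set.Icc (-N) N)
    (hN : 0 < N) (hα : 0 < α) (hc₀ : 0 < c₀) (hσ : σ = c₀ / α ^ 2)
    (hM : 0 ≤ M) (hB₁ : 0 < B₁) (hB₂ : 0 < B₂)
    (x : ℝ → ℂ) (xm : ℝ → ℝ → ℂ) (t : ℝ)
    (hbound : ∀ τ : ℝ, ‖x (t + τ) - xm t τ‖ ≤
      M * (B₁ * α ^ 3 * |τ| + (Real.pi / 3) * B₂ * α ^ 7 * |τ| ^ 3))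
    (η lam : ℝ)
    (hintx : Integrable (fun τ : ℝ => x (t + τ) * ((g (τ / σ) / σ : ℝ) : ℂ) *
      Complex.exp (-((2 * Real.pi * η * τ + Real.pi * lam * τ ^ 2 : ℝ) : ℂ) * Complex.I)))
    (hintxm : Integrable (fun τ : ℝ => xm t τ * ((g (τ / σ) / σ : ℝ) : ℂ) *
      Complex.exp (-((2 * Real.pi * η * τ + Real.pi * lam * τ ^ 2 : ℝ) : ℂ) * Complex.I))) :
    ‖((∫ τ : ℝ, x (t + τ) * ((g (τ / σ) / σ : ℝ) : ℂ) *
          Complex.exp (-((2 * Real.pi * η * τ + Real.pi * lam * τ ^ 2 : ℝ) : ℂ) * Complex.I)) -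
       ∫ τ : ℝ, xm t τ * ((g (τ / σ) / σ : ℝ) : ℂ) *
          Complex.exp (-((2 * Real.pi * η * τ + Real.pi * lam * τ ^ 2 : ℝ) : ℂ) * Complex.I))‖
      ≤ α * M * (B₁ * c₀ * N + (Real.pi / 3) * B₂ * c₀ ^ 3 * N ^ 3) :=
  stmt_6_general g N σ c₀ α M B₁ B₂ hg0 hg1 hsupp hα hc₀ hσ hM hB₁ hB₂ x xm t hbound η lam hintx
    hintxm
end

section
/- Let ℜ(η,λ) = Σ_{k=0}^{K} c_k ğ(σ(η - φ'_k), σ²(λ - φ''_k)) where c_k ∈ ℂ with |c_k| = A_k > 0, and suppose |ğ(a,b)| ≤ L/√(|a| + ρ|b|) for all (a,b) ≠ (0,0). Assume σ ≥ 1, the separation |φ'_k - φ'_ℓ| + ρ|φ''_k - φ''_ℓ| ≥ 2Δ for k ≠ ℓ, and σΔ ≥ (4ML/μ)² where M = Σ_k A_k and μ = min_k A_k. Then for any (η,λ) with σ|η - φ'_ℓ| + ρσ²|λ - φ''_ℓ| ≤ (4ML/μ)²: |ℜ(η,λ) - c_ℓ ğ(σ(η - φ'_ℓ), σ²(λ -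 φ''_ℓ))| ≤ ML/√(σΔ). -/
/-!
By the separation of the ridges and the reverse triangle inequality (using `σ ≤ σ²`), a point
within `σΔ` of the `ℓ`-th ridge in the weighted distance `σ|·| + ρσ²|·|` lies at least `σΔ`
from every other ridge. The decay bound on `ğ` then caps the `k`-th term by `A_k L / √(σΔ)`,
and summing over `k ≠ ℓ` gives at most `M L / √(σΔ)`.
-/

open Finset

theorem mul_add_le_of_triangle {σ ρ x x' y y' u v : ℝ} (hσ : 1 ≤ σ) (hρ : 0 ≤ ρ) :
    σ * (|x - x'| + ρ * |y - y'|) ≤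
      (σ * |u - x| + ρ * σ ^ 2 * |v - y|) + (σ * |u - x'| + ρ * σ ^ 2 * |v - y'|) := by
  have hx : |x - x'| ≤ |u - x| + |u - x'| := abs_sub_comm u x ▸ abs_sub_le x u x'
  have hy : |y - y'| ≤ |v - y| + |v - y'| := abs_sub_comm v y ▸ abs_sub_le y v y'
  have hσσ : σ ≤ σ ^ 2 := by nlinarith
  calc σ * (|x - x'| + ρ * |y - y'|)
      ≤ σ * (|u - x| + |u - x'|) + ρ * σ ^ 2 * (|v - y| + |v - y'|) := by
        rw [mul_add, ← mul_assoc, mul_comm σ ρ]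
        gcongr
    _ = _ := by ring

theorem le_abs_add_of_separated {σ ρ Δ x x' y y' u v : ℝ} (hσ : 1 ≤ σ) (hρ : 0 ≤ ρ)
    (hsep : 2 * Δ ≤ |x - x'| + ρ * |y - y'|)
    (hnear : σ * |u - x'| + ρ * σ ^ 2 * |v - y'| ≤ σ * Δ) :
    σ * Δ ≤ |σ * (u - x)| + ρ * |σ ^ 2 * (v - y)| := by
  have hσ0 : 0 < σ := one_pos.trans_le hσ
  rw [abs_mul, abs_mul, abs_of_pos hσ0, abs_of_pos (pow_pos hσ0 2)]
  have htri :=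
    mul_add_le_of_triangle (x := x) (x' := x') (y := y) (y' := y') (u := u) (v := v) hσ hρ
  have hsepσ := mul_le_mul_of_nonneg_left hsep hσ0.le
  linarith

theorem norm_le_div_sqrt_of_le {E : Type*} [SeminormedAddCommGroup E] {g : ℝ → ℝ → E}
    {ρ L s a b : ℝ}
    (hg : ∀ a b : ℝ, (a, b) ≠ (0, 0) → ‖g a b‖ ≤ L / Real.sqrt (|a| + ρ * |b|))
    (hs : 0 < s) (hab : s ≤ |a| + ρ * |b|) :
    ‖g a b‖ ≤ L / Real.sqrt s := by
  have hne : (a, b) ≠ (0, 0) := by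
    rintro ⟨rfl, rfl⟩
    simp only [abs_zero, mul_zero, add_zero] at hab
    exact hab.not_gt hs
  have hgab := hg a b hne
  have hL : 0 ≤ L := by
    have hpos : 0 < Real.sqrt (|a| + ρ * |b|) := Real.sqrt_pos.2 (hs.trans_le hab)
    simpa using (le_div_iff₀ hpos).1 ((norm_nonneg _).trans hgab)
  exact hgab.trans (div_le_div_of_nonneg_left hL (Real.sqrt_pos.2 hs) (Real.sqrt_le_sqrt hab))

theorem norm_sum_sub_le_sum_of_forall_ne {ι E : Type*} [Fintype ι] [DecidableEq ι]
    [SeminormedAddCommGroup E] {f : ι → E} {B : ι → ℝ} (l : ι)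
    (hf : ∀ k, k ≠ l → ‖f k‖ ≤ B k) (hB : 0 ≤ B l) :
    ‖∑ k, f k - f l‖ ≤ ∑ k, B k := by
  rw [← sum_erase_add _ _ (mem_univ l), add_sub_cancel_right, ← sum_erase_add _ _ (mem_univ l)]
  calc ‖∑ k ∈ univ.erase l, f k‖
      ≤ ∑ k ∈ univ.erase l, ‖f k‖ := norm_sum_le _ _
    _ ≤ ∑ k ∈ univ.erase l, B k := sum_le_sum fun k hk => hf k (ne_of_mem_erase hk)
    _ ≤ ∑ k ∈ univ.erase l, B k + B l := le_add_of_nonneg_right hB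

theorem stmt_9_general (K : ℕ) (c : Fin (K + 1) → ℂ) (A : Fin (K + 1) → ℝ)
    (φ' φ'' : Fin (K + 1) → ℝ) (gbr : ℝ → ℝ → ℂ) (σ ρ Δ L M μ : ℝ)
    (hcA : ∀ k, ‖c k‖ = A k)
    (hg : ∀ a b : ℝ, (a, b) ≠ (0, 0) →
      ‖gbr a b‖ ≤ L / Real.sqrt (|a| + ρ * |b|))
    (hσ : 1 ≤ σ) (hρ : 0 ≤ ρ) (hΔ : 0 < Δ)
    (hsep : ∀ k l : Fin (K + 1), k ≠ l →
      2 * Δ ≤ |φ' k - φ' l| + ρ * |φ'' k - φ'' l|)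
    (hM : M = ∑ k, A k)
    (hσΔ : (4 * M * L / μ) ^ 2 ≤ σ * Δ)
    (l : Fin (K + 1)) (η lam : ℝ)
    (hin : σ * |η - φ' l| + ρ * σ ^ 2 * |lam - φ'' l| ≤ (4 * M * L / μ) ^ 2) :
    ‖(∑ k, c k * gbr (σ * (η - φ' k)) (σ ^ 2 * (lam - φ'' k))) -
        c l * gbr (σ * (η - φ' l)) (σ ^ 2 * (lam - φ'' l))‖
      ≤ M * L / Real.sqrt (σ * Δ) := by
  have hσΔ0 : 0 < σ * Δ := mul_pos (one_pos.trans_le hσ) hΔ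
  have hL : 0 ≤ L := (norm_nonneg _).trans (by simpa using hg 1 0 (by simp))
  rw [hM, mul_div_assoc, sum_mul]
  refine norm_sum_sub_le_sum_of_forall_ne l (fun k hkl => ?_) ?_
  · rw [norm_mul, hcA]
    gcongr
    · exact hcA k ▸ norm_nonneg _
    exact norm_le_div_sqrt_of_le hg hσΔ0
      (le_abs_add_of_separated hσ hρ (hsep k l hkl) (hin.trans hσΔ))
  · exact mul_nonneg (hcA l ▸ norm_nonneg _) (div_nonneg hL (Real.sqrt_nonneg _))

/-- Lemma 4, equation (41): at any point of the cluster G_ℓ, the chirp-model chirplet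
transform ℜ differs from the ℓ-th term by at most ML/√(σΔ). -/
theorem stmt_9 (K : ℕ) (c : Fin (K + 1) → ℂ) (A : Fin (K + 1) → ℝ)
    (φ' φ'' : Fin (K + 1) → ℝ) (gbr : ℝ → ℝ → ℂ) (σ ρ Δ L M μ : ℝ)
    (hcA : ∀ k, ‖c k‖ = A k) (hApos : ∀ k, 0 < A k)
    (hg : ∀ a b : ℝ, (a, b) ≠ (0, 0) →
      ‖gbr a b‖ ≤ L / Real.sqrt (|a| + ρ * |b|))
    (hσ : 1 ≤ σ) (hρ : 0 ≤ ρ) (hΔ : 0 < Δ)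
    (hsep : ∀ k l : Fin (K + 1), k ≠ l →
      2 * Δ ≤ |φ' k - φ' l| + ρ * |φ'' k - φ'' l|)
    (hM : M = ∑ k, A k)
    (hμ : μ = Finset.univ.inf' Finset.univ_nonempty A)
    (hσΔ : (4 * M * L / μ) ^ 2 ≤ σ * Δ)
    (l : Fin (K + 1)) (η lam : ℝ)
    (hin : σ * |η - φ' l| + ρ * σ ^ 2 * |lam - φ'' l| ≤ (4 * M * L / μ) ^ 2) :
    ‖(∑ k, c k * gbr (σ * (η - φ' k)) (σ ^ 2 * (lam - φ'' k))) -
        c l * gbr (σ * (η - φ' l)) (σ ^ 2 * (lam - φ'' l))‖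
      ≤ M * L / Real.sqrt (σ * Δ) :=
  stmt_9_general K c A φ' φ'' gbr σ ρ Δ L M μ hcA hg hσ hρ hΔ hsep hM hσΔ l η lam hin
end

section
/- Under the same assumptions as in the cluster-perturbation lemma (ℜ(η,λ) = Σ_{k=0}^{K} c_k ğ(σ(η-φ'_k), σ²(λ-φ''_k)), |c_k| = A_k, |ğ(a,b)| ≤ L/√(|a|+ρ|b|), σ ≥ 1, separation |φ'_k - φ'_ℓ| + ρ|φ''_k - φ''_ℓ| ≥ 2Δ for k ≠ ℓ, and ğ(0,0) = 1), one has |ℜ(φ'_ℓ, φ''_ℓ) - c_ℓ| ≤ ML/√(2σΔ), where M = Σ_k A_k. -/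
/-!
At `(φ'_ℓ, φ''_ℓ)` the `ℓ`-th term is exactly `c_ℓ` because `ğ(0, 0) = 1`. For `k ≠ ℓ` the
arguments of `ğ` satisfy `σ|φ'_ℓ - φ'_k| + ρσ²|φ''_ℓ - φ''_k| ≥ 2σΔ` (using `σ ≤ σ²`), so the
decay of `ğ` bounds that term by `A_k L / √(2σΔ)`; summing gives `M L / √(2σΔ)`.
-/

open Finset

lemma norm_sum_sub_le_of_forall_ne {ι E : Type*} [Fintype ι] [SeminormedAddCommGroup E]
    (f : ι → E) (w : ι → ℝ) (hw : ∀ k, 0 ≤ w k) (l : ι) (hf : ∀ k, k ≠ l → ‖f k‖ ≤ w k) :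
    ‖∑ k, f k - f l‖ ≤ ∑ k, w k := by
  classical
  rw [← sum_erase_add _ _ (mem_univ l), add_sub_cancel_right]
  calc ‖∑ k ∈ univ.erase l, f k‖
      ≤ ∑ k ∈ univ.erase l, ‖f k‖ := norm_sum_le _ _
    _ ≤ ∑ k ∈ univ.erase l, w k := sum_le_sum fun k hk => hf k (ne_of_mem_erase hk)
    _ ≤ ∑ k, w k := sum_le_sum_of_subset_of_nonneg (erase_subset _ _) fun k _ _ => hw k

lemma mul_abs_add_le_abs_mul_add_abs_sq_mul {σ ρ : ℝ} (hσ : 1 ≤ σ) (hρ : 0 ≤ ρ) (a b : ℝ) :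
    σ * (|a| + ρ * |b|) ≤ |σ * a| + ρ * |σ ^ 2 * b| := by
  have hσσ : σ ≤ σ ^ 2 := by nlinarith
  rw [abs_mul, abs_mul, abs_of_nonneg (by linarith : 0 ≤ σ), abs_of_nonneg (sq_nonneg σ)]
  nlinarith [mul_le_mul_of_nonneg_right hσσ (mul_nonneg hρ (abs_nonneg b))]

def HasChirpletDecay {E : Type*} [SeminormedAddCommGroup E] (g : ℝ → ℝ → E) (ρ L : ℝ) : Prop :=
  ∀ a b : ℝ, (a, b) ≠ (0, 0) → ‖g a b‖ ≤ L / Real.sqrt (|a| + ρ * |b|)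

namespace HasChirpletDecay

variable {E : Type*} [SeminormedAddCommGroup E] {g : ℝ → ℝ → E} {ρ L : ℝ}

lemma nonneg (hg : HasChirpletDecay g ρ L) : 0 ≤ L := by
  simpa using (norm_nonneg _).trans (hg 1 0 (by simp))

lemma norm_le_of_le (hg : HasChirpletDecay g ρ L) {r a b : ℝ} (hr : 0 < r)
    (hab : r ≤ |a| + ρ * |b|) : ‖g a b‖ ≤ L / Real.sqrt r := by
  have hab0 : (a, b) ≠ (0, 0) := by
    rintro ⟨rfl, rfl⟩
    simp at hab
    linarith
  have := hg.nonneg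
  exact (hg a b hab0).trans (by gcongr)

end HasChirpletDecay

theorem stmt_10_general (K : ℕ) (c : Fin (K + 1) → ℂ) (A : Fin (K + 1) → ℝ)
    (φ' φ'' : Fin (K + 1) → ℝ) (gbr : ℝ → ℝ → ℂ) (σ ρ Δ L M : ℝ)
    (hcA : ∀ k, ‖c k‖ = A k)
    (hg : ∀ a b : ℝ, (a, b) ≠ (0, 0) →
      ‖gbr a b‖ ≤ L / Real.sqrt (|a| + ρ * |b|))
    (hg00 : gbr 0 0 = 1)
    (hσ : 1 ≤ σ) (hρ : 0 ≤ ρ) (hΔ : 0 < Δ)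
    (hsep : ∀ k l : Fin (K + 1), k ≠ l →
      2 * Δ ≤ |φ' k - φ' l| + ρ * |φ'' k - φ'' l|)
    (hM : M = ∑ k, A k) (l : Fin (K + 1)) :
    ‖(∑ k, c k * gbr (σ * (φ' l - φ' k)) (σ ^ 2 * (φ'' l - φ'' k))) - c l‖
      ≤ M * L / Real.sqrt (2 * σ * Δ) := by
  have hdecay : HasChirpletDecay gbr ρ L := hg
  have hr : 0 < 2 * σ * Δ := by nlinarith
  have hA : ∀ k, 0 ≤ A k := fun k => hcA k ▸ norm_nonneg _
  calc ‖(∑ k, c k * gbr (σ * (φ' l - φ' k)) (σ ^ 2 * (φ'' l - φ'' k))) - c l‖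
      = ‖(∑ k, c k * gbr (σ * (φ' l - φ' k)) (σ ^ 2 * (φ'' l - φ'' k)))
          - c l * gbr (σ * (φ' l - φ' l)) (σ ^ 2 * (φ'' l - φ'' l))‖ := by simp [hg00]
    _ ≤ ∑ k, A k * (L / Real.sqrt (2 * σ * Δ)) := by
      refine norm_sum_sub_le_of_forall_ne _ _
        (fun k => mul_nonneg (hA k) (div_nonneg hdecay.nonneg (Real.sqrt_nonneg _))) l
        fun k hk => ?_
      have hsepk : 2 * σ * Δ ≤ σ * (|φ' l - φ' k| + ρ * |φ'' l - φ'' k|) := by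
        nlinarith [hsep l k (Ne.symm hk)]
      rw [norm_mul, hcA]
      exact mul_le_mul_of_nonneg_left (hdecay.norm_le_of_le hr
        (hsepk.trans (mul_abs_add_le_abs_mul_add_abs_sq_mul hσ hρ _ _))) (hA k)
    _ = M * L / Real.sqrt (2 * σ * Δ) := by rw [← sum_mul, hM, mul_div_assoc]

/-- Lemma 4, equation (42): evaluating the chirp-model chirplet transform exactly at
(φ'_ℓ, φ''_ℓ) recovers the ℓ-th coefficient up to error ML/√(2σΔ). -/
theorem stmt_10 (K : ℕ) (c : Fin (K + 1) → ℂ) (A : Fin (K + 1) → ℝ)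
    (φ' φ'' : Fin (K + 1) → ℝ) (gbr : ℝ → ℝ → ℂ) (σ ρ Δ L M : ℝ)
    (hcA : ∀ k, ‖c k‖ = A k) (hApos : ∀ k, 0 < A k)
    (hg : ∀ a b : ℝ, (a, b) ≠ (0, 0) →
      ‖gbr a b‖ ≤ L / Real.sqrt (|a| + ρ * |b|))
    (hg00 : gbr 0 0 = 1)
    (hσ : 1 ≤ σ) (hρ : 0 ≤ ρ) (hΔ : 0 < Δ)
    (hsep : ∀ k l : Fin (K + 1), k ≠ l →
      2 * Δ ≤ |φ' k - φ' l| + ρ * |φ'' k - φ'' l|)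
    (hM : M = ∑ k, A k) (l : Fin (K + 1)) :
    ‖(∑ k, c k * gbr (σ * (φ' l - φ' k)) (σ ^ 2 * (φ'' l - φ'' k))) - c l‖
      ≤ M * L / Real.sqrt (2 * σ * Δ) :=
  stmt_10_general K c A φ' φ'' gbr σ ρ Δ L M hcA hg hg00 hσ hρ hΔ hsep hM l
end

section
/- Let x(t) = c·e^{i2π(ηt + λt²/2)} be a linear chirp with c ∈ ℂ, η, λ ∈ ℝ, and let g be the Gaussian window g(τ) = (1/√(2π))e^{-τ²/2} with σ > 0. Then the chirplet transform 𝔖_x(t, η', λ') = ∫_ℝ x(t+τ)(1/σ)g(τ/σ) e^{-i2πη'τ - iπλ'τ²} dτ satisfies 𝔖_x(t,η',λ') = x(t)·ğ(σ(η' - (η + λt)), σ²(λ' - λ)), where ğ(a,b) = (1+i2πb)^{-1/2} exp(-2π²a²/(1+i2πb)). -/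
open MeasureTheory Real

/-- Polynomial Fourier transform of the Gaussian window (explicit closed form). -/
noncomputable def gbr (a b : ℝ) : ℂ :=
  (1 + ((2 * Real.pi * b : ℝ) : ℂ) * Complex.I) ^ (-(1 / 2) : ℂ) *
    Complex.exp (-((2 * Real.pi ^ 2 * a ^ 2 : ℝ) : ℂ) /
      (1 + ((2 * Real.pi * b : ℝ) : ℂ) * Complex.I))

/-- A linear chirp. -/
noncomputable def chirp (c : ℂ) (η lam : ℝ) (t : ℝ) : ℂ :=
  c * Complex.exp (((2 * Real.pi * (η * t + lam * t ^ 2 / 2) : ℝ) : ℂ) * Complex.I)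

lemma ofReal_mul_cpow' {r : ℝ} (hr : 0 < r) {w : ℂ} (hw : w ≠ 0) (s : ℂ) :
    ((r : ℂ) * w) ^ s = (r : ℂ) ^ s * w ^ s := by
  have hr' : (r : ℂ) ≠ 0 := Complex.ofReal_ne_zero.mpr hr.ne'
  rw [Complex.cpow_def_of_ne_zero (mul_ne_zero hr' hw), Complex.cpow_def_of_ne_zero hr',
    Complex.cpow_def_of_ne_zero hw, Complex.log_ofReal_mul hr hw,
    ← Complex.ofReal_log hr.le, add_mul, Complex.exp_add]

/-- Exact factorization of the chirplet transform of a linear chirp with Gaussian window: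
𝔖_x(t,η',λ') = x(t) · ğ(σ(η' - (η + λt)), σ²(λ' - λ)). -/
theorem stmt_18 (c : ℂ) (η lam σ : ℝ) (hσ : 0 < σ) (t η' lam' : ℝ) :
    (∫ τ : ℝ, chirp c η lam (t + τ) * ((gwin (τ / σ) / σ : ℝ) : ℂ) *
        Complex.exp (-((2 * Real.pi * η' * τ + Real.pi * lam' * τ ^ 2 : ℝ) : ℂ) * Complex.I))
      = chirp c η lam t * gbr (σ * (η' - (η + lam * t))) (σ ^ 2 * (lam' - lam)) := by
  have hσ' : (σ : ℂ) ≠ 0 := Complex.ofReal_ne_zero.mpr hσ.ne'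
  set B : ℂ := ((-(1 / (2 * σ ^ 2)) : ℝ) : ℂ) + ((Real.pi * (lam - lam') : ℝ) : ℂ) * Complex.I
    with hBdef
  set C : ℂ := ((2 * Real.pi * (η + lam * t - η') : ℝ) : ℂ) * Complex.I with hCdef
  have hB : B.re < 0 := by
    have h1 : (0:ℝ) < 1 / (2 * σ ^ 2) := by positivity
    simp only [hBdef, Complex.add_re, Complex.ofReal_re, Complex.mul_I_re, Complex.ofReal_im]
    linarith
  have hB0 : B ≠ 0 := fun h => by rw [h] at hB; simp at hB
  set z : ℂ := 1 + ((2 * Real.pi * (σ ^ 2 * (lam' - lam)) : ℝ) : ℂ) * Complex.I with hzdef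
  have hz : z ≠ 0 := fun h => by
    have h2 := congrArg Complex.re h
    simp only [hzdef, Complex.add_re, Complex.one_re, Complex.mul_I_re, Complex.ofReal_im,
      Complex.zero_re, neg_zero, add_zero] at h2
    norm_num at h2
  have hzarg : z.arg ≠ Real.pi := by
    intro h
    rw [Complex.arg_eq_pi_iff] at h
    have h3 : z.re = 1 := by
      simp only [hzdef, Complex.add_re, Complex.one_re, Complex.mul_I_re, Complex.ofReal_im,
        neg_zero, add_zero]
    rw [h3] at h
    linarith [h.1]
  have hz2 : z = 2 * (σ : ℂ) ^ 2 * (-B) := by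
    rw [hzdef, hBdef]
    push_cast
    field_simp
    ring
  have key : ∀ τ : ℝ, chirp c η lam (t + τ) * ((gwin (τ / σ) / σ : ℝ) : ℂ) *
        Complex.exp (-((2 * Real.pi * η' * τ + Real.pi * lam' * τ ^ 2 : ℝ) : ℂ) * Complex.I)
      = (chirp c η lam t * ((1 / (σ * Real.sqrt (2 * Real.pi)) : ℝ) : ℂ)) *
        Complex.exp (B * (τ : ℂ) ^ 2 + C * (τ : ℂ) + 0) := by
    intro τ
    simp only [chirp, gwin, hBdef, hCdef]
    push_cast [Complex.ofReal_exp]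
    have k2 : Complex.exp (2 * (π:ℂ) * (η * (t + τ) + lam * (t + τ) ^ 2 / 2) * Complex.I) *
        Complex.exp (-((τ:ℂ) / σ) ^ 2 / 2) *
        Complex.exp (-(2 * (π:ℂ) * η' * τ + π * lam' * τ ^ 2) * Complex.I)
        = Complex.exp (2 * (π:ℂ) * (η * t + lam * t ^ 2 / 2) * Complex.I) *
          Complex.exp ((-(1 / (2 * (σ:ℂ) ^ 2)) + π * (lam - lam') * Complex.I) * (τ:ℂ) ^ 2 +
              2 * π * (η + lam * t - η') * Complex.I * τ + 0) := by
      rw [← Complex.exp_add, ← Complex.exp_add, ← Complex.exp_add]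
      congr 1
      field_simp
      ring
    linear_combination (c / (σ * ((Real.sqrt (2 * Real.pi) : ℝ) : ℂ))) * k2
  simp_rw [key]
  rw [MeasureTheory.integral_const_mul, integral_cexp_quadratic hB C 0]
  rw [gbr, mul_assoc]
  congr 1
  have hC2 : C ^ 2 = -(((2 * Real.pi * (η + lam * t - η') : ℝ) : ℂ)) ^ 2 := by
    rw [hCdef, mul_pow, Complex.I_sq]
    ring
  have hexp : (0 : ℂ) - C ^ 2 / (4 * B)
      = -((2 * Real.pi ^ 2 * (σ * (η' - (η + lam * t))) ^ 2 : ℝ) : ℂ) / z := by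
    rw [hC2, hz2]
    push_cast
    field_simp
    ring
  have hdiv : (π : ℂ) / (-B) = ((2 * Real.pi * σ ^ 2 : ℝ) : ℂ) * z⁻¹ := by
    rw [hz2]
    push_cast
    field_simp
  have hzinv : z⁻¹ ≠ 0 := inv_ne_zero hz
  have hr : (0:ℝ) < 2 * Real.pi * σ ^ 2 := by positivity
  rw [hexp, hdiv, ofReal_mul_cpow' hr hzinv, Complex.inv_cpow z _ hzarg, ← Complex.cpow_neg]
  have hsq : ((2 * Real.pi * σ ^ 2 : ℝ) : ℂ) ^ ((1:ℂ)/2) = ((σ * Real.sqrt (2 * Real.pi) : ℝ) : ℂ) := by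
    rw [show ((1:ℂ)/2) = ((1/2 : ℝ) : ℂ) from by norm_num, ← Complex.ofReal_cpow hr.le]
    congr 1
    rw [← Real.sqrt_eq_rpow, Real.sqrt_mul (by positivity), Real.sqrt_sq hσ.le]
    ring
  rw [show (1/2 : ℂ) = ((1:ℂ)/2) from by norm_num] at *
  rw [hsq]
  rw [show -((1:ℂ)/2) = (-(1/2) : ℂ) from by norm_num]
  rw [← mul_assoc, ← mul_assoc]
  have hpos : (0:ℝ) < σ * Real.sqrt (2 * Real.pi) := by positivity
  have h4 : ((1 / (σ * Real.sqrt (2 * Real.pi)) : ℝ) : ℂ) * ((σ * Real.sqrt (2 * Real.pi) : ℝ) : ℂ) = 1 := by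
    rw [← Complex.ofReal_mul, one_div, inv_mul_cancel₀ hpos.ne', Complex.ofReal_one]
  rw [h4, one_mul]
end
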